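/- arXiv:1807.11383 — 3 statements merged into one kernel-verified Lean document; each statement's English description precedes it below -/
import Mathlib

section
/- For every integer n ≥ 3, the number of simple biased graphs with vertex set [n] satisfies |B_n| ≥ 2^{(1/2)(n-1)!}. -/
open SimpleGraph

/-- A cycle of a graph `G`: a connected, 2-regular subgraph. -/
def IsCycleSubgraph {V : Type*} (G : SimpleGraph V) (C : G.Subgraph) : Prop :=
  C.Connected ∧ ∀ v ∈ C.verts, (C.neighborSet v).ncard = 2

/-- A theta-subgraph of `G`: the union of three internally disjoint paths
joining two distinct vertices. -/
def IsThetaSubgraph {V : Type*} (G : SimpleGraph V) (H : G.Subgraph) : Prop :=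
  ∃ (u v : V) (p₁ p₂ p₃ : G.Walk u v),
    u ≠ v ∧ p₁.IsPath ∧ p₂.IsPath ∧ p₃.IsPath ∧
    p₁ ≠ p₂ ∧ p₁ ≠ p₃ ∧ p₂ ≠ p₃ ∧
    {x | x ∈ p₁.support} ∩ {x | x ∈ p₂.support} = {u, v} ∧
    {x | x ∈ p₁.support} ∩ {x | x ∈ p₃.support} = {u, v} ∧
    {x | x ∈ p₂.support} ∩ {x | x ∈ p₃.support} = {u, v} ∧
    H = p₁.toSubgraph ⊔ p₂.toSubgraph ⊔ p₃.toSubgraph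

/-- `(G, B)` is a biased graph: `B` is a set of cycles of `G` such that no
theta-subgraph of `G` contains precisely two cycles belonging to `B`. -/
def IsBiasedGraph {V : Type*} (G : SimpleGraph V) (B : Set G.Subgraph) : Prop :=
  (∀ C ∈ B, IsCycleSubgraph G C) ∧
  ∀ H : G.Subgraph, IsThetaSubgraph G H → ({C ∈ B | C ≤ H} : Set G.Subgraph).ncard ≠ 2

/-- The number of simple biased graphs with vertex set `[n]`. -/
noncomputable def biasedGraphCount (n : ℕ) : ℕ :=
  Nat.card {p : Σ G : SimpleGraph (Fin n), Set G.Subgraph // IsBiasedGraph p.1 p.2}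

/-!
Any set of Hamiltonian cycles of `Kₙ` is a valid bias class. A theta-subgraph has only two
vertices of degree three; a spanning `2`-regular subgraph of it must use both edges at every
other vertex, so it can only differ from another one in the edge joining the two branch vertices,
and the degree count at a branch vertex rules that out. Hence a theta contains at most one
Hamiltonian cycle, never two. Since `Kₙ` has `(n - 1)! / 2` Hamiltonian cycles (each is traced
by exactly two of the `(n - 1)!` cyclic permutations of `[n]`), there are at least
`2 ^ ((n - 1)! / 2)` biased graphs on `[n]`.
-/

lemma Set.eq_of_sdiff_singleton_eq_of_ncard_eq {α : Type*} {s t : Set α} {a : α}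
    (hs : s.Finite) (ht : t.Finite) (hdiff : s \ {a} = t \ {a}) (hcard : s.ncard = t.ncard) :
    s = t := by
  by_cases has : a ∈ s <;> by_cases hat : a ∈ t
  · rw [← Set.insert_eq_of_mem has, ← Set.insert_eq_of_mem hat, ← Set.insert_sdiff_singleton,
      hdiff, Set.insert_sdiff_singleton]
  · have := Set.ncard_sdiff_singleton_add_one has hs
    rw [hdiff, Set.sdiff_singleton_eq_self hat] at this
    omega
  · have := Set.ncard_sdiff_singleton_add_one hat ht
    rw [← hdiff, Set.sdiff_singleton_eq_self has] at this
    omega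
  · rwa [Set.sdiff_singleton_eq_self has, Set.sdiff_singleton_eq_self hat] at hdiff

namespace SimpleGraph

variable {V : Type*} {G : SimpleGraph V}

lemma Walk.neighborSet_toSubgraph_eq_empty {u v w : V} {p : G.Walk u v} (hw : w ∉ p.support) :
    p.toSubgraph.neighborSet w = ∅ :=
  Set.eq_empty_of_forall_notMem fun _ hx => hw (p.mem_verts_toSubgraph.mp hx.fst_mem)

lemma Walk.IsPath.ncard_neighborSet_toSubgraph_le_two {u v : V} {p : G.Walk u v}
    (hp : p.IsPath) (w : V) : (p.toSubgraph.neighborSet w).ncard ≤ 2 := by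
  by_cases hnil : p.Nil
  · have : p.toSubgraph.neighborSet w = ∅ :=
      Set.eq_empty_of_forall_notMem fun x hx => by
        obtain ⟨i, -, hi⟩ := (p.toSubgraph_adj_iff).mp hx
        simp [Walk.length_eq_zero_iff.mpr hnil] at hi
    simp [this]
  by_cases hw : w ∉ p.support
  · simp [Walk.neighborSet_toSubgraph_eq_empty hw]
  obtain ⟨i, rfl, hi⟩ := Walk.mem_support_iff_exists_getVert.mp (not_not.mp hw)
  rcases Nat.eq_zero_or_pos i with rfl | hi0
  · simp [hp.neighborSet_toSubgraph_startpoint hnil]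
  rcases hi.lt_or_eq with hlt | rfl
  · exact (hp.ncard_neighborSet_toSubgraph_internal_eq_two hi0.ne' hlt).le
  · simp [hp.neighborSet_toSubgraph_endpoint hnil]

theorem Subgraph.eq_of_le_of_ncard_neighborSet_eq_two [Finite V] {H C₁ C₂ : G.Subgraph}
    {u v : V} (hH : ∀ w, w ≠ u → w ≠ v → (H.neighborSet w).ncard ≤ 2)
    (h₁ : C₁ ≤ H) (h₂ : C₂ ≤ H)
    (hC₁ : ∀ w, (C₁.neighborSet w).ncard = 2) (hC₂ : ∀ w, (C₂.neighborSet w).ncard = 2) :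
    C₁ = C₂ := by
  have hfull : ∀ {C : G.Subgraph}, C ≤ H → (∀ w, (C.neighborSet w).ncard = 2) →
      ∀ w, w ≠ u → w ≠ v → C.neighborSet w = H.neighborSet w := fun hle hC w hwu hwv =>
    Set.eq_of_subset_of_ncard_le (neighborSet_subset_of_subgraph hle w)
      (by rw [hC]; exact hH w hwu hwv) (Set.toFinite _)
  have hnonbranch : ∀ w, w ≠ u → w ≠ v → C₁.neighborSet w = C₂.neighborSet w :=
    fun w hwu hwv => by rw [hfull h₁ hC₁ w hwu hwv, hfull h₂ hC₂ w hwu hwv]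
  have hbranch : ∀ {a b : V}, (∀ w, w ≠ a → w ≠ b → C₁.neighborSet w = C₂.neighborSet w) →
      C₁.neighborSet a = C₂.neighborSet a := fun {a b} hab => by
    refine Set.eq_of_sdiff_singleton_eq_of_ncard_eq (a := b) (Set.toFinite _) (Set.toFinite _)
      ?_ (by rw [hC₁, hC₂])
    ext x
    simp only [Set.mem_sdiff, Set.mem_singleton_iff, mem_neighborSet]
    refine and_congr_left fun hxb => ?_
    by_cases hxa : x = a
    · subst hxa
      exact iff_of_false (C₁.loopless.irrefl x) (C₂.loopless.irrefl x)
    · rw [adj_comm C₁, adj_comm C₂, ← mem_neighborSet, hab x hxa hxb, mem_neighborSet]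
  have hnb : ∀ w, C₁.neighborSet w = C₂.neighborSet w := by
    intro w
    by_cases hwu : w = u
    · exact hwu ▸ hbranch (b := v) hnonbranch
    by_cases hwv : w = v
    · exact hwv ▸ hbranch (b := u) fun w h₁ h₂ => hnonbranch w h₂ h₁
    exact hnonbranch w hwu hwv
  have hverts : ∀ {C : G.Subgraph}, (∀ w, (C.neighborSet w).ncard = 2) → C.verts = Set.univ :=
    fun {C} hC => Set.eq_univ_of_forall fun w => Subgraph.Adj.fst_mem
      (Set.nonempty_of_ncard_ne_zero (s := C.neighborSet w) (by rw [hC w]; norm_num)).some_mem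
  exact Subgraph.ext (by rw [hverts hC₁, hverts hC₂])
    (funext fun a => funext fun b => propext (Set.ext_iff.mp (hnb a) b))

end SimpleGraph

lemma IsThetaSubgraph.ncard_neighborSet_le_two {V : Type*} {G : SimpleGraph V} {H : G.Subgraph}
    (hH : IsThetaSubgraph G H) : ∃ u v, ∀ w, w ≠ u → w ≠ v → (H.neighborSet w).ncard ≤ 2 := by
  obtain ⟨u, v, p₁, p₂, p₃, -, hp₁, hp₂, hp₃, -, -, -, h₁₂, h₁₃, h₂₃, rfl⟩ := hH
  refine ⟨u, v, fun w hwu hwv => ?_⟩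
  have hdisj : ∀ {p q : G.Walk u v}, {x | x ∈ p.support} ∩ {x | x ∈ q.support} = {u, v} →
      w ∈ p.support → w ∉ q.support := fun h hp hq => by
    have : w ∈ ({u, v} : Set V) := h ▸ ⟨hp, hq⟩
    simp_all
  simp only [Subgraph.neighborSet_sup]
  by_cases hw₁ : w ∈ p₁.support
  · rw [Walk.neighborSet_toSubgraph_eq_empty (hdisj h₁₂ hw₁),
      Walk.neighborSet_toSubgraph_eq_empty (hdisj h₁₃ hw₁), Set.union_empty, Set.union_empty]
    exact hp₁.ncard_neighborSet_toSubgraph_le_two w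
  rw [Walk.neighborSet_toSubgraph_eq_empty hw₁, Set.empty_union]
  by_cases hw₂ : w ∈ p₂.support
  · rw [Walk.neighborSet_toSubgraph_eq_empty (hdisj h₂₃ hw₂), Set.union_empty]
    exact hp₂.ncard_neighborSet_toSubgraph_le_two w
  rw [Walk.neighborSet_toSubgraph_eq_empty hw₂, Set.empty_union]
  exact hp₃.ncard_neighborSet_toSubgraph_le_two w

theorem isBiasedGraph_of_forall_isSpanning {V : Type*} [Finite V] {G : SimpleGraph V}
    {B : Set G.Subgraph} (hB : ∀ C ∈ B, IsCycleSubgraph G C ∧ C.IsSpanning) :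
    IsBiasedGraph G B := by
  refine ⟨fun C hC => (hB C hC).1, fun H hH => ?_⟩
  obtain ⟨u, v, hdeg⟩ := hH.ncard_neighborSet_le_two
  have hreg : ∀ C ∈ B, ∀ w, (C.neighborSet w).ncard = 2 := fun C hC w =>
    (hB C hC).1.2 w ((hB C hC).2 w)
  have hsub : ({C ∈ B | C ≤ H} : Set G.Subgraph).Subsingleton :=
    fun C₁ h₁ C₂ h₂ => Subgraph.eq_of_le_of_ncard_neighborSet_eq_two hdeg h₁.2 h₂.2
      (hreg C₁ h₁.1) (hreg C₂ h₂.1)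
  have := Set.ncard_le_one_iff_subsingleton.mpr hsub
  omega

theorem two_pow_card_le_biasedGraphCount {n : ℕ} {G : SimpleGraph (Fin n)} (S : Finset G.Subgraph)
    (hS : ∀ C ∈ S, IsCycleSubgraph G C ∧ C.IsSpanning) : 2 ^ S.card ≤ biasedGraphCount n := by
  let f : Set S → {p : Σ G : SimpleGraph (Fin n), Set G.Subgraph // IsBiasedGraph p.1 p.2} :=
    fun B => ⟨⟨G, Subtype.val '' B⟩, isBiasedGraph_of_forall_isSpanning
      (by rintro _ ⟨C, -, rfl⟩; exact hS C C.2)⟩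
  have hf : Function.Injective f := fun B₁ B₂ h => by
    simp only [f, Subtype.mk.injEq, Sigma.mk.injEq, heq_eq_eq, true_and] at h
    exact Set.image_injective.mpr Subtype.val_injective h
  calc 2 ^ S.card = Nat.card (Set S) := by simp
    _ ≤ biasedGraphCount n := Nat.card_le_card_of_injective f hf

namespace Equiv.Perm

variable {α : Type*}

def toSubgraph (σ : Perm α) : (⊤ : SimpleGraph α).Subgraph :=
  SimpleGraph.toSubgraph (fromRel fun a b => σ a = b) le_top

lemma toSubgraph_isSpanning (σ : Perm α) : σ.toSubgraph.IsSpanning :=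
  SimpleGraph.toSubgraph.isSpanning _ _

lemma toSubgraph_adj {σ : Perm α} {a b : α} :
    σ.toSubgraph.Adj a b ↔ a ≠ b ∧ (σ a = b ∨ σ b = a) := by
  simp [toSubgraph]

lemma neighborSet_toSubgraph {σ : Perm α} (hσ : ∀ x, σ x ≠ x) (a : α) :
    σ.toSubgraph.neighborSet a = {σ a, σ⁻¹ a} := by
  ext b
  simp only [Subgraph.mem_neighborSet, toSubgraph_adj, Set.mem_insert_iff,
    Set.mem_singleton_iff, eq_inv_iff_eq]
  constructor
  · rintro ⟨-, h | h⟩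
    exacts [Or.inl h.symm, Or.inr h]
  · rintro (rfl | rfl)
    · exact ⟨(hσ a).symm, Or.inl rfl⟩
    · exact ⟨fun h => hσ b h, Or.inr rfl⟩

lemma ncard_neighborSet_toSubgraph {σ : Perm α} (hσ : ∀ x, σ x ≠ x)
    (hσ₂ : ∀ x, σ (σ x) ≠ x) (a : α) : (σ.toSubgraph.neighborSet a).ncard = 2 := by
  rw [neighborSet_toSubgraph hσ, Set.ncard_pair]
  intro h
  apply hσ₂ a
  rw [h]
  simp

lemma toSubgraph_connected [Finite α] [Nonempty α] {σ : Perm α} (hσ : σ.IsCycle)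
    (hσ' : ∀ x, σ x ≠ x) : σ.toSubgraph.Connected := by
  rw [Subgraph.connected_iff, Subgraph.preconnected_iff]
  refine ⟨?_, ⟨Classical.arbitrary α, σ.toSubgraph_isSpanning _⟩⟩
  have hreach : ∀ a (k : ℕ), σ.toSubgraph.coe.Reachable
      ⟨a, σ.toSubgraph_isSpanning a⟩ ⟨(σ ^ k) a, σ.toSubgraph_isSpanning _⟩ := by
    intro a k
    induction k with
    | zero => rfl
    | succ k ih =>
      refine ih.trans (Adj.reachable ?_)
      rw [pow_succ', mul_apply]
      exact toSubgraph_adj.mpr ⟨(hσ' _).symm, Or.inl rfl⟩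
  rintro ⟨a, -⟩ ⟨b, -⟩
  obtain ⟨k, rfl⟩ := hσ.exists_pow_eq (hσ' a) (hσ' b)
  exact hreach a k

lemma eq_or_eq_inv_of_toSubgraph_eq [Finite α] {σ τ : Perm α} (hσ : σ.IsCycle)
    (hσ' : ∀ x, σ x ≠ x) (hτ : ∀ x, τ x ≠ x) (hτ₂ : ∀ x, τ (τ x) ≠ x)
    (h : τ.toSubgraph = σ.toSubgraph) : τ = σ ∨ τ = σ⁻¹ := by
  have hτa : ∀ a, τ a = σ a ∨ τ a = σ⁻¹ a := fun a => by
    have : τ a ∈ τ.toSubgraph.neighborSet a := by simp [neighborSet_toSubgraph hτ]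
    rwa [h, neighborSet_toSubgraph hσ'] at this
  by_cases hagree : ∃ x, τ x = σ x
  · left
    obtain ⟨x, hx⟩ := hagree
    -- once `τ` follows `σ` at `y`, it cannot turn back at `σ y` without creating a 2-cycle
    have hstep : ∀ y, τ y = σ y → τ (σ y) = σ (σ y) := fun y hy =>
      (hτa (σ y)).resolve_right fun h' => hτ₂ y (by rw [hy, h']; simp)
    have hpow : ∀ k : ℕ, τ ((σ ^ k) x) = σ ((σ ^ k) x) := by
      intro k
      induction k with
      | zero => exact hx
      | succ k ih => rw [pow_succ', mul_apply]; exact hstep _ ih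
    ext b
    obtain ⟨k, rfl⟩ := hσ.exists_pow_eq (hσ' x) (hσ' b)
    exact hpow k
  · push Not at hagree
    exact Or.inr (ext fun a => (hτa a).resolve_left (hagree a))

end Equiv.Perm

open Finset

namespace Equiv.Perm

variable {α : Type*} [Fintype α] [DecidableEq α] {σ : Perm α}

lemma isCycle_of_cycleType_eq_singleton {n : ℕ} (h : σ.cycleType = {n}) : σ.IsCycle :=
  card_cycleType_eq_one.mp (by simp [h])

lemma card_support_of_cycleType_eq_singleton {n : ℕ} (h : σ.cycleType = {n}) :
    #σ.support = n := by
  rw [← sum_cycleType, h, Multiset.sum_singleton]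

lemma apply_ne_self_of_cycleType_eq (h : σ.cycleType = {Fintype.card α}) (x : α) : σ x ≠ x :=
  mem_support.mp <| (eq_univ_of_card _ (card_support_of_cycleType_eq_singleton h)).symm ▸
    mem_univ x

lemma apply_apply_ne_self_of_cycleType_eq (h : σ.cycleType = {Fintype.card α})
    (hα : 3 ≤ Fintype.card α) (x : α) : σ (σ x) ≠ x := by
  intro hx
  have hσ := isCycle_of_cycleType_eq_singleton h
  have hsq : σ ^ 2 = 1 :=
    hσ.pow_eq_one_iff.mpr ⟨x, apply_ne_self_of_cycleType_eq h x, by rwa [sq, mul_apply]⟩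
  have := orderOf_le_of_pow_eq_one two_pos hsq
  rw [hσ.orderOf, card_support_of_cycleType_eq_singleton h] at this
  omega

lemma isCycleSubgraph_toSubgraph (h : σ.cycleType = {Fintype.card α})
    (hα : 3 ≤ Fintype.card α) : IsCycleSubgraph ⊤ σ.toSubgraph := by
  have : Nonempty α := Fintype.card_pos_iff.mp (by omega)
  exact ⟨toSubgraph_connected (isCycle_of_cycleType_eq_singleton h)
      (apply_ne_self_of_cycleType_eq h),
    fun v _ => ncard_neighborSet_toSubgraph (apply_ne_self_of_cycleType_eq h)
      (apply_apply_ne_self_of_cycleType_eq h hα) v⟩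

end Equiv.Perm

open Equiv.Perm in
theorem exists_spanning_cycles_factorial_le_two_mul_card {α : Type*} [Fintype α]
    [DecidableEq α] (hα : 3 ≤ Fintype.card α) :
    ∃ S : Finset (⊤ : SimpleGraph α).Subgraph,
      (∀ C ∈ S, IsCycleSubgraph ⊤ C ∧ C.IsSpanning) ∧ (Fintype.card α - 1).factorial ≤ 2 * #S := by
  classical
  set cyclic : Finset (Equiv.Perm α) := {σ | σ.cycleType = {Fintype.card α}}
  have hmem : ∀ {σ}, σ ∈ cyclic ↔ σ.cycleType = {Fintype.card α} := by simp [cyclic]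
  refine ⟨cyclic.image toSubgraph, ?_, ?_⟩
  · simp only [mem_image]
    rintro _ ⟨σ, hσ, rfl⟩
    exact ⟨isCycleSubgraph_toSubgraph (hmem.mp hσ) hα, σ.toSubgraph_isSpanning⟩
  have hcyclic : #cyclic = (Fintype.card α - 1).factorial := by
    rw [card_of_cycleType_singleton (by omega) le_rfl, Nat.choose_self, mul_one]
  refine hcyclic ▸ card_le_mul_card_image _ 2 fun C hC => ?_
  obtain ⟨σ, hσ, rfl⟩ := mem_image.mp hC
  calc #{τ ∈ cyclic | τ.toSubgraph = σ.toSubgraph} ≤ #{σ, σ⁻¹} := by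
        refine card_le_card fun τ hτ => ?_
        obtain ⟨hτ, hτσ⟩ := mem_filter.mp hτ
        rw [hmem] at hσ hτ
        rcases eq_or_eq_inv_of_toSubgraph_eq (isCycle_of_cycleType_eq_singleton hσ)
          (apply_ne_self_of_cycleType_eq hσ) (apply_ne_self_of_cycleType_eq hτ)
          (apply_apply_ne_self_of_cycleType_eq hτ hα) hτσ with rfl | rfl <;> simp
    _ ≤ 2 := card_le_two

/-- For every `n ≥ 3`, `|B_n| ≥ 2 ^ ((1/2)(n-1)!)`. -/
theorem biasedGraphCount_lower_bound (n : ℕ) (hn : 3 ≤ n) :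
    (2 : ℝ) ^ (((n - 1).factorial : ℝ) / 2) ≤ (biasedGraphCount n : ℝ) := by
  obtain ⟨S, hS, hcount⟩ :=
    exists_spanning_cycles_factorial_le_two_mul_card (α := Fin n) (by simpa using hn)
  rw [Fintype.card_fin] at hcount
  calc (2 : ℝ) ^ (((n - 1).factorial : ℝ) / 2) ≤ (2 : ℝ) ^ (S.card : ℝ) := by
        gcongr
        · norm_num
        · rw [div_le_iff₀ two_pos]
          exact_mod_cast (by omega : (n - 1).factorial ≤ S.card * 2)
    _ = ((2 ^ S.card : ℕ) : ℝ) := by rw [Real.rpow_natCast]; push_cast; rfl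
    _ ≤ biasedGraphCount n := by exact_mod_cast two_pow_card_le_biasedGraphCount S hS
end

section
/- For every integer n ≥ 5, the quantity S_n = Σ_{k=0}^{n-3} 1/(k!·(n-k)) satisfies e/n < S_n < e/n + 5/n², where e is Euler's number. -/
/-!
Write `1/(n-k) = 1/n + k/(n(n-k))`. For `k ≤ n - 3` the correction `k/(n(n-k))` lies between
`k/n²` and `(k + k²/3)/n²`, so with `P = Σ 1/k!`, `Q = Σ k/k!`, `R = Σ k²/k!` over `k < n - 2`,
`P/n + Q/n² ≤ S_n ≤ P/n + (Q + R/3)/n²`. Shifting the index gives `Q ≤ e` and `R ≤ 2e`, which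
yields the upper bound since `5e/3 < 5`. For the lower bound, the tail of the exponential series
gives `e ≤ P + 1/(n-2)`, and `Q ≥ 2 > n/(n-2)` absorbs it.
-/

open Finset Nat

section Pointwise

variable {x k : ℝ}

lemma one_div_add_div_sq_le_one_div_sub (hk : 0 ≤ k) (hkx : k < x) :
    1 / x + k / x ^ 2 ≤ 1 / (x - k) := by
  have hx : 0 < x := hk.trans_lt hkx
  have hxk : 0 < x - k := sub_pos.mpr hkx
  rw [div_add_div _ _ hx.ne' (by positivity), div_le_div_iff₀ (by positivity) hxk]
  nlinarith [mul_nonneg (mul_nonneg hk hk) hx.le]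

lemma one_div_sub_le_one_div_add_div_sq (hk : 0 ≤ k) (hkx : k + 3 ≤ x) :
    1 / (x - k) ≤ 1 / x + (k + k ^ 2 / 3) / x ^ 2 := by
  have hx : 0 < x := by linarith
  have hxk : 0 < x - k := by linarith
  have key : 0 ≤ 1 / x + (k + k ^ 2 / 3) / x ^ 2 - 1 / (x - k) := by
    have : 1 / x + (k + k ^ 2 / 3) / x ^ 2 - 1 / (x - k)
        = k ^ 2 * (x - 3 - k) / (3 * x ^ 2 * (x - k)) := by
      field_simp
      ring
    rw [this]
    exact div_nonneg (mul_nonneg (sq_nonneg k) (by linarith)) (by positivity)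
  linarith

end Pointwise

section FactorialSums

lemma sum_range_succ_natCast_div_factorial (m : ℕ) :
    ∑ k ∈ range (m + 1), (k : ℝ) / k ! = ∑ k ∈ range m, 1 / (k ! : ℝ) := by
  rw [sum_range_succ']
  simp only [CharP.cast_eq_zero, zero_div, add_zero]
  refine sum_congr rfl fun k _ => ?_
  rw [factorial_succ]
  push_cast
  field_simp

lemma sum_range_succ_sq_div_factorial (m : ℕ) :
    ∑ k ∈ range (m + 1), (k : ℝ) ^ 2 / k ! =
      ∑ k ∈ range m, (k : ℝ) / k ! + ∑ k ∈ range m, 1 / (k ! : ℝ) := by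
  rw [sum_range_succ', ← sum_add_distrib]
  simp only [CharP.cast_eq_zero, ne_eq, OfNat.ofNat_ne_zero, not_false_eq_true, zero_pow,
    zero_div, add_zero]
  refine sum_congr rfl fun k _ => ?_
  rw [factorial_succ]
  push_cast
  field_simp

lemma sum_range_one_div_factorial_le_exp_one (m : ℕ) :
    ∑ k ∈ range m, 1 / (k ! : ℝ) ≤ Real.exp 1 := by
  simpa using Real.sum_le_exp_of_nonneg zero_le_one m

lemma sum_range_natCast_div_factorial_le_exp_one (m : ℕ) :
    ∑ k ∈ range m, (k : ℝ) / k ! ≤ Real.exp 1 := by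
  cases m with
  | zero => simpa using (Real.exp_pos 1).le
  | succ m =>
    rw [sum_range_succ_natCast_div_factorial]
    exact sum_range_one_div_factorial_le_exp_one m

lemma sum_range_sq_div_factorial_le_two_mul_exp_one (m : ℕ) :
    ∑ k ∈ range m, (k : ℝ) ^ 2 / k ! ≤ 2 * Real.exp 1 := by
  cases m with
  | zero => simpa using (Real.exp_pos 1).le
  | succ m =>
    rw [sum_range_succ_sq_div_factorial, two_mul]
    exact add_le_add (sum_range_natCast_div_factorial_le_exp_one m)
      (sum_range_one_div_factorial_le_exp_one m)

lemma two_le_sum_range_natCast_div_factorial {m : ℕ} (hm : 3 ≤ m) :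
    2 ≤ ∑ k ∈ range m, (k : ℝ) / k ! := by
  calc (2 : ℝ) = ∑ k ∈ range 3, (k : ℝ) / k ! := by norm_num [sum_range_succ, factorial]
    _ ≤ ∑ k ∈ range m, (k : ℝ) / k ! :=
      sum_le_sum_of_subset_of_nonneg (range_mono hm) fun _ _ _ => by positivity

lemma exp_one_le_sum_range_one_div_factorial_add_inv {m : ℕ} (hm : 3 ≤ m) :
    Real.exp 1 ≤ ∑ k ∈ range m, 1 / (k ! : ℝ) + 1 / m := by
  have htail := Real.exp_bound' zero_le_one le_rfl (n := m) (by omega)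
  simp only [one_pow, one_mul] at htail
  have hfact : (m : ℝ) + 1 ≤ m ! := by exact_mod_cast Nat.lt_factorial_self hm
  have hm0 : (0 : ℝ) < m := by positivity
  have hrem : ((m : ℝ) + 1) / (m ! * m) ≤ 1 / m := by
    rw [div_le_div_iff₀ (by positivity) hm0]
    nlinarith
  linarith

end FactorialSums

section WeightedSums

variable {x : ℝ} {m : ℕ}

lemma sum_one_div_factorial_add_le_sum_one_div_factorial_mul_sub (hmx : (m : ℝ) ≤ x) :
    (∑ k ∈ range m, 1 / (k ! : ℝ)) / x + (∑ k ∈ range m, (k : ℝ) / k !) / x ^ 2 ≤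
      ∑ k ∈ range m, 1 / ((k ! : ℝ) * (x - k)) := by
  rw [sum_div, sum_div, ← sum_add_distrib]
  refine sum_le_sum fun k hk => ?_
  have hkx : (k : ℝ) < x := by
    have : (k : ℝ) + 1 ≤ m := by exact_mod_cast mem_range.mp hk
    linarith
  have := one_div_add_div_sq_le_one_div_sub k.cast_nonneg hkx
  calc 1 / (k ! : ℝ) / x + k / k ! / x ^ 2 = 1 / k ! * (1 / x + k / x ^ 2) := by ring
    _ ≤ 1 / k ! * (1 / (x - k)) := by gcongr
    _ = 1 / (k ! * (x - k)) := by rw [one_div_mul_one_div]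

lemma sum_one_div_factorial_mul_sub_le (hmx : (m : ℝ) + 2 ≤ x) :
    ∑ k ∈ range m, 1 / ((k ! : ℝ) * (x - k)) ≤
      (∑ k ∈ range m, 1 / (k ! : ℝ)) / x +
        (∑ k ∈ range m, (k : ℝ) / k ! + (∑ k ∈ range m, (k : ℝ) ^ 2 / k !) / 3) / x ^ 2 := by
  rw [sum_div, sum_div, ← sum_add_distrib, sum_div, ← sum_add_distrib]
  refine sum_le_sum fun k hk => ?_
  have hkx : (k : ℝ) + 3 ≤ x := by
    have : (k : ℝ) + 1 ≤ m := by exact_mod_cast mem_range.mp hk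
    linarith
  have := one_div_sub_le_one_div_add_div_sq k.cast_nonneg hkx
  calc 1 / ((k ! : ℝ) * (x - k)) = 1 / k ! * (1 / (x - k)) := by rw [one_div_mul_one_div]
    _ ≤ 1 / k ! * (1 / x + (k + k ^ 2 / 3) / x ^ 2) := by gcongr
    _ = 1 / k ! / x + (k / k ! + k ^ 2 / k ! / 3) / x ^ 2 := by ring

end WeightedSums

/-- For every `n ≥ 5`, the quantity `S_n = Σ_{k=0}^{n-3} 1/(k! (n-k))` satisfies
`e/n < S_n < e/n + 5/n²`. -/
theorem S_n_bounds (n : ℕ) (hn : 5 ≤ n) :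
    Real.exp 1 / n < (∑ k ∈ Finset.range (n - 2), 1 / ((k.factorial : ℝ) * ((n : ℝ) - k))) ∧
    (∑ k ∈ Finset.range (n - 2), 1 / ((k.factorial : ℝ) * ((n : ℝ) - k))) <
      Real.exp 1 / n + 5 / (n : ℝ) ^ 2 := by
  obtain ⟨m, rfl⟩ : ∃ m, n = m + 2 := ⟨n - 2, by omega⟩
  have hm : 3 ≤ m := by omega
  have hm3 : (3 : ℝ) ≤ m := by exact_mod_cast hm
  rw [Nat.add_sub_cancel, show ((m + 2 : ℕ) : ℝ) = m + 2 by push_cast; ring]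
  set P := ∑ k ∈ range m, 1 / (k ! : ℝ)
  set Q := ∑ k ∈ range m, (k : ℝ) / (k ! : ℝ)
  constructor
  · have hQ : 1 / (m : ℝ) / (m + 2) < Q / (m + 2) ^ 2 := by
      have hQ2 : 2 ≤ Q := two_le_sum_range_natCast_div_factorial hm
      rw [div_div, div_lt_div_iff₀ (by positivity) (by positivity)]
      nlinarith [mul_nonneg (sub_nonneg.mpr hQ2) (by positivity : (0 : ℝ) ≤ m + 2)]
    calc Real.exp 1 / (m + 2) ≤ (P + 1 / m) / (m + 2) := by
          gcongr; exact exp_one_le_sum_range_one_div_factorial_add_inv hm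
      _ = P / (m + 2) + 1 / m / (m + 2) := add_div _ _ _
      _ < P / (m + 2) + Q / (m + 2) ^ 2 := by gcongr
      _ ≤ _ := sum_one_div_factorial_add_le_sum_one_div_factorial_mul_sub (by linarith)
  · have hQR : Q + (∑ k ∈ range m, (k : ℝ) ^ 2 / k !) / 3 < 5 := by
      linarith [sum_range_natCast_div_factorial_le_exp_one m,
        sum_range_sq_div_factorial_le_two_mul_exp_one m, Real.exp_one_lt_three]
    calc _ ≤ P / (m + 2) + (Q + (∑ k ∈ range m, (k : ℝ) ^ 2 / k !) / 3) / (m + 2) ^ 2 :=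
          sum_one_div_factorial_mul_sub_le le_rfl
      _ < Real.exp 1 / (m + 2) + 5 / (m + 2) ^ 2 := by
          refine add_lt_add_of_le_of_lt ?_ ?_ <;> gcongr
          exact sum_range_one_div_factorial_le_exp_one m
end

section
/- For each integer n ≥ 3, the number of simple biased graphs with vertex set [n] that arise from an abelian-group-labelling is at most (2·n! + 1)^{C(n,2)²}, where C(n,2) = n(n-1)/2. -/
open SimpleGraph

/-- The product `σ` of the labels along a walk, where an edge traversed from `x` to `y`
contributes `γ(xy)` if `x < y` and `γ(xy)⁻¹` otherwise. -/
def walkLabelProd {n : ℕ} {Γ : Type} [Group Γ] (γ : Sym2 (Fin n) → Γ)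
    {G : SimpleGraph (Fin n)} {u v : Fin n} (w : G.Walk u v) : Γ :=
  (w.darts.map fun d =>
    if d.fst < d.snd then γ s(d.fst, d.snd) else (γ s(d.fst, d.snd))⁻¹).prod

/-- A cycle subgraph `C` of `G` is balanced with respect to the labelling `γ` if the
product of the labels along a cyclic ordering of `C` is the identity. -/
def IsBalancedCycle {n : ℕ} {Γ : Type} [Group Γ] {G : SimpleGraph (Fin n)}
    (γ : Sym2 (Fin n) → Γ) (C : G.Subgraph) : Prop :=
  IsCycleSubgraph G C ∧
  ∃ (u : Fin n) (w : G.Walk u u), w.IsCycle ∧ w.toSubgraph = C ∧ walkLabelProd γ w = 1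

/-- `(G, B)` arises from an abelian-group-labelling: `B` is exactly the set of balanced
cycles with respect to some labelling of the edges of `G` by an abelian group. -/
def ArisesFromAbelianLabelling {n : ℕ} (G : SimpleGraph (Fin n))
    (B : Set G.Subgraph) : Prop :=
  ∃ (Γ : Type) (_ : CommGroup Γ) (γ : Sym2 (Fin n) → Γ),
    B = {C | IsBalancedCycle γ C}

/-- The number of simple biased graphs with vertex set `[n]` that arise from an
abelian-group-labelling. -/
noncomputable def abelianLabellableCount (n : ℕ) : ℕ :=
  Nat.card {p : Σ G : SimpleGraph (Fin n), Set G.Subgraph //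
    IsBiasedGraph p.1 p.2 ∧ ArisesFromAbelianLabelling p.1 p.2}

/-!
Write `m = C(n,2)` and view a labelling `γ` by an abelian group `Γ` as the `ℤ`-linear map
`ℤ^m → Γ`, `x ↦ ∏ γ(e)^{x_e}`. A cycle is balanced exactly when its signed incidence vector lies in
the kernel of this map, so the balanced cycles are those whose incidence vector lies in the
lattice `L` spanned by the incidence vectors of balanced cycles.

`L` is already spanned by at most `m² - m` of these vectors. Take a maximal linearly independent
family `T` of `r ≤ m` of them and `r` coordinates on which `T` has a nonzero `r × r` minor; as the
vectors have entries in `{-1, 0, 1}`, the minor is at most `r! ≤ 2^{m(m-2)}`. Projecting onto these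
coordinates is injective on `L`, so adding a generator outside the current span at least halves
the index of the projected lattice in `ℤ^r`, which starts at `|minor|`. Hence at most `m(m-2)`
vectors are added to `T`.

The incidence vector of a directed cycle is that of its successor permutation, so `(G, B)` is
determined by `G` and a tuple of `m² - m` optional permutations of `[n]`, which gives at most
`2^m (n! + 1)^{m² - m} ≤ (2 n! + 1)^{m²}` biased graphs.
-/

open Submodule

theorem AddSubgroup.two_mul_index_le_of_lt {G : Type*} [AddGroup G] {H K : AddSubgroup G}
    (hHK : H < K) (hH : H.index ≠ 0) : 2 * K.index ≤ H.index := by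
  have hmul := AddSubgroup.relIndex_mul_index hHK.le
  have h1 : H.relIndex K ≠ 1 := fun h => hHK.not_ge (AddSubgroup.relIndex_eq_one.1 h)
  have h0 : H.relIndex K ≠ 0 := fun h => hH (by rw [← hmul, h, zero_mul])
  rw [← hmul]
  exact Nat.mul_le_mul_right _ (by omega)

section SpanImageIndex

variable {M N : Type*} [AddCommGroup M] [AddCommGroup N]

noncomputable def spanImageIndex (P : M →ₗ[ℤ] N) (S : Set M) : ℕ :=
  ((span ℤ S).map P).toAddSubgroup.index

theorem exists_spanImageIndex_insert_lt (P : M →ₗ[ℤ] N) {Y : Set M}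
    (hP : Set.InjOn P (span ℤ Y)) {S : Set M} (hSY : S ⊆ Y) (hS : spanImageIndex P S ≠ 0)
    (hYS : ¬ Y ⊆ span ℤ S) :
    ∃ y ∈ Y, y ∉ S ∧ 0 < spanImageIndex P (insert y S) ∧
      2 * spanImageIndex P (insert y S) ≤ spanImageIndex P S := by
  obtain ⟨y, hyY, hyS⟩ := Set.not_subset.1 hYS
  have hle : (span ℤ S).map P ≤ (span ℤ (insert y S)).map P :=
    map_mono (span_mono (Set.subset_insert y S))
  have hlt : (span ℤ S).map P < (span ℤ (insert y S)).map P := by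
    refine lt_of_le_of_ne hle fun heq => hyS ?_
    have : P y ∈ (span ℤ S).map P := by
      rw [heq]
      exact mem_map_of_mem (subset_span (Set.mem_insert y S))
    obtain ⟨x, hx, hxy⟩ := this
    rwa [← hP (span_mono hSY hx) (subset_span hyY) hxy]
  refine ⟨y, hyY, fun h => hyS (subset_span h), Nat.pos_of_ne_zero fun h => hS ?_,
    AddSubgroup.two_mul_index_le_of_lt hlt hS⟩
  exact Nat.eq_zero_of_zero_dvd (h ▸ AddSubgroup.index_dvd_of_le hle)

theorem exists_finset_span_eq_of_spanImageIndex_le (P : M →ₗ[ℤ] N) {Y : Set M}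
    (hP : Set.InjOn P (span ℤ Y)) (k : ℕ) (S : Finset M) (hSY : ↑S ⊆ Y)
    (hS0 : spanImageIndex P S ≠ 0) (hSk : spanImageIndex P S ≤ 2 ^ k) :
    ∃ S' : Finset M, ↑S' ⊆ Y ∧ S'.card ≤ S.card + k ∧ span ℤ (S' : Set M) = span ℤ Y := by
  classical
  induction k generalizing S with
  | zero =>
    refine ⟨S, hSY, le_self_add, le_antisymm (span_mono hSY) (span_le.2 ?_)⟩
    by_contra hYS
    obtain ⟨y, -, -, hy0, hy⟩ := exists_spanImageIndex_insert_lt P hP hSY hS0 hYS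
    rw [pow_zero] at hSk
    omega
  | succ k ih =>
    by_cases hYS : Y ⊆ span ℤ (S : Set M)
    · exact ⟨S, hSY, le_self_add, le_antisymm (span_mono hSY) (span_le.2 hYS)⟩
    obtain ⟨y, hyY, hyS, hy0, hy⟩ := exists_spanImageIndex_insert_lt P hP hSY hS0 hYS
    rw [pow_succ] at hSk
    obtain ⟨S', hS'Y, hcard, hspan⟩ := ih (insert y S) (by simpa using Set.insert_subset hyY hSY)
      (by simpa using hy0.ne') (by simpa using (by omega : _ ≤ 2 ^ k))
    refine ⟨S', hS'Y, ?_, hspan⟩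
    rw [Finset.card_insert_of_notMem (by simpa using hyS)] at hcard
    omega

end SpanImageIndex

theorem exists_smul_mem_of_mem_span {R M : Type*} [CommRing R] [IsDomain R]
    [AddCommGroup M] [Module R M] {K : Submodule R M} {Y : Set M}
    (hY : ∀ y ∈ Y, ∃ c : R, c ≠ 0 ∧ c • y ∈ K) {x : M} (hx : x ∈ span R Y) :
    ∃ c : R, c ≠ 0 ∧ c • x ∈ K := by
  induction hx using Submodule.span_induction with
  | mem y hy => exact hY y hy
  | zero => exact ⟨1, one_ne_zero, by simp⟩
  | add x y _ _ hx hy =>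
    obtain ⟨a, ha, hax⟩ := hx
    obtain ⟨b, hb, hby⟩ := hy
    refine ⟨b * a, mul_ne_zero hb ha, ?_⟩
    rw [smul_add, mul_smul, mul_comm, mul_smul]
    exact K.add_mem (K.smul_mem _ hax) (K.smul_mem _ hby)
  | smul a x _ hx =>
    obtain ⟨c, hc, hcx⟩ := hx
    exact ⟨c, hc, by rw [smul_comm]; exact K.smul_mem _ hcx⟩

theorem exists_linearIndependent_smul_mem_span {M : Type*} [AddCommGroup M]
    [IsNoetherian ℤ M] (Y : Set M) :
    ∃ (r : ℕ) (t : Fin r → M), Set.range t ⊆ Y ∧ LinearIndependent ℤ t ∧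
      ∀ x ∈ span ℤ Y, ∃ c : ℤ, c ≠ 0 ∧ c • x ∈ span ℤ (Set.range t) := by
  obtain ⟨s, hs, hmax⟩ := exists_maximal_linearIndepOn ℤ (Subtype.val : Y → M)
  have : Finite s := hs.finite_of_isNoetherian
  let e := Finite.equivFin s
  refine ⟨Nat.card s, fun i => (e.symm i : Y), ?_, hs.comp _ e.symm.injective, fun x hx => ?_⟩
  · rintro _ ⟨i, rfl⟩
    exact (e.symm i : Y).2
  have hrange : Set.range (fun i => ((e.symm i : Y) : M)) = Subtype.val '' s := by
    ext x
    constructor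
    · rintro ⟨i, rfl⟩
      exact ⟨e.symm i, (e.symm i).2, rfl⟩
    · rintro ⟨y, hy, rfl⟩
      exact ⟨e ⟨y, hy⟩, by simp only [Equiv.symm_apply_apply]⟩
  refine exists_smul_mem_of_mem_span (fun y hy => ?_) hx
  rw [hrange]
  by_cases hys : ⟨y, hy⟩ ∈ s
  · exact ⟨1, one_ne_zero, by rw [one_smul]; exact subset_span ⟨_, hys, rfl⟩⟩
  · exact hmax _ hys

theorem exists_det_ne_zero_of_linearIndependent {R E : Type*} [CommRing R] [IsDomain R]
    [Finite E] {r : ℕ} {t : Fin r → E → R} (ht : LinearIndependent R t) :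
    ∃ J : Fin r → E, (Matrix.of fun i j => t j (J i)).det ≠ 0 := by
  classical
  let row : E → Fin r → R := fun e j => t j e
  obtain ⟨s, hs, hmax⟩ := exists_maximal_linearIndepOn R row
  have : Fintype s := Fintype.ofFinite s
  -- by maximality of `s`, a vector orthogonal to the rows in `s` is orthogonal to every row
  have hker : ∀ v : Fin r → R, (∀ e ∈ s, row e ⬝ᵥ v = 0) → v = 0 := by
    intro v hv
    let f : (Fin r → R) →ₗ[R] R := Fintype.linearCombination R v
    have hf : ∀ x, f x = x ⬝ᵥ v := fun x => by
      simp [f, Fintype.linearCombination_apply, dotProduct]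
    have hspan : span R (row '' s) ≤ LinearMap.ker f := by
      rw [span_le]
      rintro _ ⟨e, he, rfl⟩
      simp [hf, hv e he]
    have hall : ∀ e, row e ⬝ᵥ v = 0 := by
      intro e
      by_cases he : e ∈ s
      · exact hv e he
      obtain ⟨a, ha, hae⟩ := hmax e he
      have := hspan hae
      rw [LinearMap.mem_ker, map_smul, hf, smul_eq_mul] at this
      exact (mul_eq_zero.1 this).resolve_left ha
    refine funext <| Fintype.linearIndependent_iff.1 ht v (funext fun e => ?_)
    simpa [row, dotProduct, mul_comm] using hall e
  have hle : Fintype.card s ≤ r := by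
    simpa using (LinearIndepOn.linearIndependent hs).fintype_card_le_finrank
  have hge : r ≤ Fintype.card s := by
    let φ : (Fin r → R) →ₗ[R] (s → R) := (Matrix.of fun (e : s) j => row e j).mulVecLin
    have hφ : Function.Injective φ := by
      rw [← LinearMap.ker_eq_bot, LinearMap.ker_eq_bot']
      intro v hv
      exact hker v fun e he => congrFun hv ⟨e, he⟩
    simpa using LinearMap.finrank_le_finrank_of_injective hφ
  let J : Fin r ≃ s := (Fintype.equivFinOfCardEq (le_antisymm hle hge)).symm
  refine ⟨fun i => J i, fun hdet => ?_⟩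
  obtain ⟨v, hv, hmul⟩ := Matrix.exists_mulVec_eq_zero_iff.2 hdet
  refine hv (hker v fun e he => ?_)
  obtain ⟨i, hi⟩ := J.surjective ⟨e, he⟩
  have : e = J i := by rw [hi]
  simpa [this, Matrix.mulVec, row] using congrFun hmul i

section Projection

variable {E : Type*} {r : ℕ} {t : Fin r → E → ℤ} {J : Fin r → E}

theorem linearIndependent_funLeft_comp (hdet : (Matrix.of fun i j => t j (J i)).det ≠ 0) :
    LinearIndependent ℤ (LinearMap.funLeft ℤ ℤ J ∘ t) :=
  Matrix.linearIndependent_cols_of_det_ne_zero hdet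

theorem spanImageIndex_funLeft_range (hdet : (Matrix.of fun i j => t j (J i)).det ≠ 0) :
    spanImageIndex (LinearMap.funLeft ℤ ℤ J) (Set.range t)
      = (Matrix.of fun i j => t j (J i)).det.natAbs := by
  rw [spanImageIndex, map_span, ← Set.range_comp]
  refine (Submodule.natAbs_det_basis_change (Pi.basisFun ℤ (Fin r)) _
    (Module.Basis.span (linearIndependent_funLeft_comp hdet))).symm.trans ?_
  rw [Module.Basis.det_apply]
  congr 2
  ext i j
  simp [Module.Basis.toMatrix_apply, Module.Basis.span_apply]

theorem injOn_funLeft_span (hli : LinearIndependent ℤ (LinearMap.funLeft ℤ ℤ J ∘ t))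
    {Y : Set (E → ℤ)} (hY : ∀ x ∈ span ℤ Y, ∃ c : ℤ, c ≠ 0 ∧ c • x ∈ span ℤ (Set.range t)) :
    Set.InjOn (LinearMap.funLeft ℤ ℤ J) (span ℤ Y) := by
  intro x hx y hy hxy
  obtain ⟨c, hc, hcxy⟩ := hY (x - y) (sub_mem hx hy)
  obtain ⟨a, ha⟩ := (mem_span_range_iff_exists_fun ℤ).1 hcxy
  have hPa : ∑ j, a j • (LinearMap.funLeft ℤ ℤ J ∘ t) j = 0 := by
    calc ∑ j, a j • (LinearMap.funLeft ℤ ℤ J ∘ t) j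
        = LinearMap.funLeft ℤ ℤ J (∑ j, a j • t j) := by
          simp only [map_sum, map_smul, Function.comp_apply]
      _ = 0 := by rw [ha, map_smul, map_sub, hxy, sub_self, smul_zero]
  have ha0 : a = 0 := funext (Fintype.linearIndependent_iff.1 hli a hPa)
  rw [ha0] at ha
  simp only [Pi.zero_apply, zero_smul, Finset.sum_const_zero] at ha
  exact sub_eq_zero.1 ((smul_eq_zero.1 ha.symm).resolve_left hc)

end Projection

open Nat in
theorem factorial_le_two_pow_mul_sub_two {m : ℕ} (hm : 3 ≤ m) : m ! ≤ 2 ^ (m * (m - 2)) := by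
  induction m, hm using Nat.le_induction with
  | base => decide
  | succ m hm ih =>
    obtain ⟨a, rfl⟩ := Nat.exists_eq_add_of_le' hm
    have hexp : (a + 3 + 1) * (a + 3 + 1 - 2) = (a + 3) * (a + 3 - 2) + (2 * a + 5) := by
      rw [show a + 3 + 1 - 2 = a + 2 by omega, show a + 3 - 2 = a + 1 by omega]
      ring
    have hsucc : a + 3 + 1 ≤ 2 ^ (2 * a + 5) :=
      (Nat.lt_two_pow_self).le.trans (Nat.pow_le_pow_right two_pos (by omega))
    rw [factorial_succ, hexp, pow_add, mul_comm (2 ^ _)]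
    exact Nat.mul_le_mul hsucc ih

open Nat in
theorem exists_finset_card_le_span_eq {E : Type*} [Fintype E] (hE : 3 ≤ Fintype.card E)
    {Y : Set (E → ℤ)} (hY : ∀ y ∈ Y, ∀ e, |y e| ≤ 1) :
    ∃ S : Finset (E → ℤ), ↑S ⊆ Y ∧ S.card ≤ Fintype.card E ^ 2 - Fintype.card E ∧
      span ℤ (S : Set (E → ℤ)) = span ℤ Y := by
  classical
  set m := Fintype.card E
  obtain ⟨r, t, htY, ht, hsat⟩ := exists_linearIndependent_smul_mem_span Y
  obtain ⟨J, hJ⟩ := exists_det_ne_zero_of_linearIndependent ht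
  have hrm : r ≤ m := by simpa using ht.fintype_card_le_finrank
  have hdet : |(Matrix.of fun i j => t j (J i)).det| ≤ 2 ^ (m * (m - 2)) := calc
    _ ≤ (r ! : ℤ) := by
      simpa using Matrix.det_le (A := Matrix.of fun i j => t j (J i)) (abv := AbsoluteValue.abs)
        fun i j => hY _ (htY ⟨j, rfl⟩) (J i)
    _ ≤ (m ! : ℤ) := by exact_mod_cast Nat.factorial_le hrm
    _ ≤ 2 ^ (m * (m - 2)) := by exact_mod_cast factorial_le_two_pow_mul_sub_two hE
  let T := Finset.univ.image t
  have hT : (T : Set (E → ℤ)) = Set.range t := by simp [T]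
  have hidx := spanImageIndex_funLeft_range hJ
  rw [← hT] at hidx
  obtain ⟨S, hSY, hcard, hspan⟩ := exists_finset_span_eq_of_spanImageIndex_le
    (LinearMap.funLeft ℤ ℤ J) (injOn_funLeft_span (linearIndependent_funLeft_comp hJ) hsat)
    (m * (m - 2)) T (hT ▸ htY) (hidx ▸ Int.natAbs_ne_zero.2 hJ)
    (by rw [hidx, ← Int.ofNat_le, Int.natCast_natAbs]; exact_mod_cast hdet)
  refine ⟨S, hSY, ?_, hspan⟩
  have hTr : T.card ≤ r := Finset.card_image_le.trans (by simp)
  have hm : m ^ 2 = m * (m - 2) + 2 * m := by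
    obtain ⟨a, ha⟩ := Nat.exists_eq_add_of_le' hE
    rw [ha, show a + 3 - 2 = a + 1 by omega]
    ring
  omega

theorem exists_image_eq_of_card_le {α β : Type*} [Nonempty α] {N : ℕ} (g : α → β)
    (S : Finset β) (hSN : S.card ≤ N) (hSg : ↑S ⊆ Set.range g) :
    ∃ f : Fin N → Option α, g '' {a | some a ∈ Set.range f} = S := by
  set l := S.toList.map (Function.invFun g)
  refine ⟨fun i => l[(i : ℕ)]?, ?_⟩
  have hmem : ∀ a, some a ∈ Set.range (fun i : Fin N => l[(i : ℕ)]?) ↔ a ∈ l := by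
    intro a
    rw [List.mem_iff_getElem?]
    constructor
    · rintro ⟨i, hi⟩
      exact ⟨i, hi⟩
    · rintro ⟨i, hi⟩
      have : i < N := (List.getElem?_eq_some_iff.1 hi).1.trans_le (by simpa [l] using hSN)
      exact ⟨⟨i, this⟩, hi⟩
  ext y
  simp only [hmem, Set.mem_image, Set.mem_ofPred_eq, l, List.mem_map, Finset.mem_toList]
  constructor
  · rintro ⟨a, ⟨x, hx, rfl⟩, rfl⟩
    rwa [Function.invFun_eq (hSg hx)]
  · intro hy
    exact ⟨_, ⟨y, hy, rfl⟩, Function.invFun_eq (hSg hy)⟩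

theorem card_simpleGraph_le {V : Type*} [Fintype V] :
    Nat.card (SimpleGraph V) ≤ 2 ^ (Fintype.card V).choose 2 := by
  classical
  have hinj : Function.Injective fun G : SimpleGraph V =>
      (Subtype.val ⁻¹' G.edgeSet : Set {e : Sym2 V // ¬ e.IsDiag}) := by
    intro G H h
    refine edgeSet_inj.1 (Set.ext fun e => ?_)
    by_cases he : e.IsDiag
    · simp [he]
    · exact Set.ext_iff.1 h ⟨e, he⟩
  refine (Nat.card_le_card_of_injective _ hinj).trans_eq ?_
  rw [Nat.card_eq_fintype_card, Fintype.card_set, Sym2.card_subtype_not_diag]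

theorem two_pow_mul_succ_pow_le {k : ℕ} (hk : 1 ≤ k) (m : ℕ) :
    2 ^ m * (k + 1) ^ (m ^ 2 - m) ≤ (2 * k + 1) ^ (m ^ 2) := by
  have hm : m + (m ^ 2 - m) = m ^ 2 := Nat.add_sub_cancel' (Nat.le_self_pow two_ne_zero m)
  calc 2 ^ m * (k + 1) ^ (m ^ 2 - m) ≤ (2 * k + 1) ^ m * (2 * k + 1) ^ (m ^ 2 - m) :=
        Nat.mul_le_mul (Nat.pow_le_pow_left (by omega) m) (Nat.pow_le_pow_left (by omega) _)
    _ = (2 * k + 1) ^ (m ^ 2) := by rw [← pow_add, hm]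

theorem List.eq_rotate_one_of_append_singleton_eq_cons {α : Type*} {L T : List α} {u : α}
    (h : L ++ [u] = u :: T) : T = L.rotate 1 := by
  cases L with
  | nil => simpa using h.symm
  | cons a L =>
    obtain ⟨rfl, rfl⟩ := List.cons_eq_cons.1 h
    simp

theorem SimpleGraph.Walk.map_snd_darts_eq_rotate {V : Type*} {G : SimpleGraph V} {u : V}
    (w : G.Walk u u) :
    w.darts.map (·.snd) = (w.darts.map (·.fst)).rotate 1 := by
  rw [Walk.map_snd_darts, Walk.map_fst_darts]
  exact List.eq_rotate_one_of_append_singleton_eq_cons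
    (w.dropLast_support_concat.trans w.cons_tail_support.symm)

theorem SimpleGraph.Walk.IsCycle.nodup_map_fst_darts {V : Type*} {G : SimpleGraph V} {u : V}
    {w : G.Walk u u} (hw : w.IsCycle) : (w.darts.map (·.fst)).Nodup := by
  rw [← List.nodup_rotate (n := 1), ← w.map_snd_darts_eq_rotate, Walk.map_snd_darts]
  exact hw.support_nodup

theorem SimpleGraph.Walk.IsCycle.exists_perm_fst_eq_snd {V : Type*} [DecidableEq V]
    {G : SimpleGraph V} {u : V} {w : G.Walk u u} (hw : w.IsCycle) :
    ∃ π : Equiv.Perm V,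
      (∀ d ∈ w.darts, π d.fst = d.snd) ∧ ∀ v ∉ w.darts.map (·.fst), π v = v := by
  set l := w.darts.map (·.fst)
  refine ⟨l.formPerm, fun d hd => ?_, fun v hv => List.formPerm_apply_of_notMem hv⟩
  obtain ⟨i, hi, rfl⟩ := List.getElem_of_mem hd
  have hil : i < l.length := by simpa [l] using hi
  calc l.formPerm (w.darts[i]).fst = l.formPerm l[i] := by simp [l]
    _ = (l.rotate 1)[i]'(by simpa using hil) := by
      rw [List.formPerm_apply_getElem l hw.nodup_map_fst_darts, List.getElem_rotate]
    _ = (w.darts.map (·.snd))[i]'(by simpa using hi) :=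
      List.getElem_of_eq w.map_snd_darts_eq_rotate.symm _
    _ = (w.darts[i]).snd := List.getElem_map ..

section SignedIncidence

variable {n : ℕ}

abbrev VertexPair (n : ℕ) := {e : Sym2 (Fin n) // ¬ e.IsDiag}

-- `a = b` gives `0`, so that fixed points of a permutation do not contribute to `permVec`.
def dartVec (a b : Fin n) : VertexPair n → ℤ := fun e =>
  if e.1 = s(a, b) then (if a < b then 1 else if b < a then -1 else 0) else 0

def walkVec {G : SimpleGraph (Fin n)} {u v : Fin n} (w : G.Walk u v) : VertexPair n → ℤ :=
  (w.darts.map fun d => dartVec d.fst d.snd).sum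

def permVec (π : Equiv.Perm (Fin n)) : VertexPair n → ℤ := ∑ v, dartVec v (π v)

theorem dartVec_self (a : Fin n) : dartVec a a = 0 := by
  ext e
  simp [dartVec]

@[simp] theorem walkVec_nil {G : SimpleGraph (Fin n)} {u : Fin n} :
    walkVec (Walk.nil : G.Walk u u) = 0 := rfl

@[simp] theorem walkVec_cons {G : SimpleGraph (Fin n)} {u v w : Fin n} (h : G.Adj u v)
    (p : G.Walk v w) : walkVec (Walk.cons h p) = dartVec u v + walkVec p := rfl

theorem walkVec_apply_eq_zero_of_notMem_edges {G : SimpleGraph (Fin n)} {u v : Fin n}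
    (w : G.Walk u v) {e : VertexPair n} (he : e.1 ∉ w.edges) : walkVec w e = 0 := by
  induction w with
  | nil => rfl
  | cons h p ih =>
    rw [Walk.edges_cons, List.mem_cons, not_or] at he
    simp [dartVec, he.1, ih he.2]

theorem abs_walkVec_apply_le_one {G : SimpleGraph (Fin n)} {u v : Fin n} {w : G.Walk u v}
    (hw : w.IsTrail) (e : VertexPair n) : |walkVec w e| ≤ 1 := by
  induction w with
  | nil => simp
  | @cons a b c h p ih =>
    have hnd := hw.edges_nodup
    rw [Walk.edges_cons, List.nodup_cons] at hnd
    by_cases he : e.1 = s(a, b)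
    · rw [walkVec_cons, Pi.add_apply,
        walkVec_apply_eq_zero_of_notMem_edges p (he ▸ hnd.1), add_zero]
      simp only [dartVec, if_pos he]
      split_ifs <;> simp
    · simpa [dartVec, he] using ih hw.of_cons

theorem exists_permVec_eq_walkVec {G : SimpleGraph (Fin n)} {u : Fin n} {w : G.Walk u u}
    (hw : w.IsCycle) : ∃ π : Equiv.Perm (Fin n), permVec π = walkVec w := by
  obtain ⟨π, hsucc, hfix⟩ := hw.exists_perm_fst_eq_snd
  refine ⟨π, ?_⟩
  set l := w.darts.map (·.fst)
  calc permVec π = ∑ v ∈ l.toFinset, dartVec v (π v) := by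
        refine (Finset.sum_subset (Finset.subset_univ _) fun v _ hv => ?_).symm
        rw [hfix v (by simpa using hv), dartVec_self]
    _ = (l.map fun v => dartVec v (π v)).sum := List.sum_toFinset _ hw.nodup_map_fst_darts
    _ = walkVec w := by
        rw [walkVec, List.map_map]
        exact congrArg List.sum (List.map_congr_left fun d hd => by simp [hsucc d hd])

section Labelling

variable {Γ : Type} [CommGroup Γ]

def labelMap (γ : Sym2 (Fin n) → Γ) : (VertexPair n → ℤ) →ₗ[ℤ] Additive Γ :=
  Fintype.linearCombination ℤ fun e => Additive.ofMul (γ e.1)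

theorem labelMap_dartVec (γ : Sym2 (Fin n) → Γ) {a b : Fin n} (hab : a ≠ b) :
    labelMap γ (dartVec a b)
      = Additive.ofMul (if a < b then γ s(a, b) else (γ s(a, b))⁻¹) := by
  have hnd : ¬ (s(a, b) : Sym2 (Fin n)).IsDiag := Sym2.mk_isDiag_iff.not.2 hab
  rw [labelMap, Fintype.linearCombination_apply, Finset.sum_eq_single ⟨s(a, b), hnd⟩]
  · rcases hab.lt_or_gt with h | h
    · simp [dartVec, h]
    · simp [dartVec, h, h.not_gt]
  · intro e _ he
    simp [dartVec, Subtype.ext_iff.not.1 he]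
  · simp

theorem walkLabelProd_eq_toMul_labelMap (γ : Sym2 (Fin n) → Γ) {G : SimpleGraph (Fin n)}
    {u v : Fin n} (w : G.Walk u v) :
    walkLabelProd γ w = (labelMap γ (walkVec w)).toMul := by
  induction w with
  | nil => simp [walkLabelProd]
  | cons h p ih =>
    rw [walkVec_cons, map_add, labelMap_dartVec γ h.ne, toMul_add, toMul_ofMul, ← ih]
    simp [walkLabelProd]

end Labelling

def cyclesIn (G : SimpleGraph (Fin n)) (L : Submodule ℤ (VertexPair n → ℤ)) : Set G.Subgraph :=
  {C | IsCycleSubgraph G C ∧ ∃ (u : Fin n) (w : G.Walk u u), w.IsCycle ∧ w.toSubgraph = C ∧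
    walkVec w ∈ L}

theorem setOf_isBalancedCycle_eq_cyclesIn {Γ : Type} [CommGroup Γ] (G : SimpleGraph (Fin n))
    (γ : Sym2 (Fin n) → Γ) :
    {C : G.Subgraph | IsBalancedCycle γ C} = cyclesIn G (LinearMap.ker (labelMap γ)) := by
  ext C
  simp only [IsBalancedCycle, cyclesIn, Set.mem_ofPred_eq, LinearMap.mem_ker,
    walkLabelProd_eq_toMul_labelMap, toMul_eq_one]

theorem cyclesIn_eq_span_inter (G : SimpleGraph (Fin n)) (L : Submodule ℤ (VertexPair n → ℤ)) :
    cyclesIn G L = cyclesIn G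
      (span ℤ ({x | ∃ (u : Fin n) (w : G.Walk u u), w.IsCycle ∧ walkVec w = x} ∩ L)) := by
  ext C
  refine and_congr_right fun _ => exists_congr fun u => exists_congr fun w =>
    and_congr_right fun hw => and_congr_right fun _ => ⟨fun h => ?_, fun h => ?_⟩
  · exact subset_span ⟨⟨u, w, hw, rfl⟩, h⟩
  · exact (span_le.2 Set.inter_subset_right) h

theorem exists_eq_cyclesIn_span_permVec (hn : 3 ≤ n) {G : SimpleGraph (Fin n)}
    {B : Set G.Subgraph} (hB : ArisesFromAbelianLabelling G B) :
    ∃ f : Fin (n.choose 2 ^ 2 - n.choose 2) → Option (Equiv.Perm (Fin n)),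
      B = cyclesIn G (span ℤ (permVec '' {π | some π ∈ Set.range f})) := by
  obtain ⟨Γ, _, γ, rfl⟩ := hB
  have hcard : Fintype.card (VertexPair n) = n.choose 2 := by
    rw [Sym2.card_subtype_not_diag, Fintype.card_fin]
  obtain ⟨S, hSY, hSc, hspan⟩ := exists_finset_card_le_span_eq
    (hcard ▸ (Nat.choose_le_choose 2 hn : Nat.choose 3 2 ≤ _))
    (Y := {x | ∃ (u : Fin n) (w : G.Walk u u), w.IsCycle ∧ walkVec w = x} ∩
      LinearMap.ker (labelMap γ))
    (by rintro _ ⟨⟨u, w, hw, rfl⟩, -⟩ e; exact abs_walkVec_apply_le_one hw.isTrail e)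
  obtain ⟨f, hf⟩ := exists_image_eq_of_card_le permVec S (hcard ▸ hSc) fun x hx => by
    obtain ⟨⟨u, w, hw, rfl⟩, -⟩ := hSY hx
    exact exists_permVec_eq_walkVec hw
  refine ⟨f, ?_⟩
  rw [setOf_isBalancedCycle_eq_cyclesIn, cyclesIn_eq_span_inter, hf, hspan]

end SignedIncidence

/-- For each `n ≥ 3`, the number of simple biased graphs with vertex set `[n]` arising
from an abelian-group-labelling is at most `(2 n! + 1) ^ (C(n,2)²)`. -/
theorem abelianLabellableCount_le (n : ℕ) (hn : 3 ≤ n) :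
    abelianLabellableCount n ≤ (2 * n.factorial + 1) ^ (n.choose 2 ^ 2) := by
  set N := n.choose 2 ^ 2 - n.choose 2
  let decode : SimpleGraph (Fin n) × (Fin N → Option (Equiv.Perm (Fin n))) →
      Σ G : SimpleGraph (Fin n), Set G.Subgraph :=
    fun p => ⟨p.1, cyclesIn p.1 (span ℤ (permVec '' {π | some π ∈ Set.range p.2}))⟩
  have hrange : {p : Σ G : SimpleGraph (Fin n), Set G.Subgraph |
      IsBiasedGraph p.1 p.2 ∧ ArisesFromAbelianLabelling p.1 p.2} ⊆ Set.range decode := by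
    rintro ⟨G, B⟩ ⟨-, hB⟩
    dsimp only at hB
    obtain ⟨f, rfl⟩ := exists_eq_cyclesIn_span_permVec hn hB
    exact ⟨(G, f), rfl⟩
  calc abelianLabellableCount n ≤ Nat.card (Set.range decode) :=
        Nat.card_mono (Set.finite_range _) hrange
    _ ≤ Nat.card (SimpleGraph (Fin n)) * (n.factorial + 1) ^ N := by
        refine (Finite.card_range_le decode).trans_eq ?_
        rw [Nat.card_prod, Nat.card_fun]
        simp [Fintype.card_perm]
    _ ≤ 2 ^ n.choose 2 * (n.factorial + 1) ^ N := by
        simpa using Nat.mul_le_mul_right ((n.factorial + 1) ^ N) (card_simpleGraph_le (V := Fin n))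
    _ ≤ (2 * n.factorial + 1) ^ (n.choose 2 ^ 2) := two_pow_mul_succ_pow_le n.factorial_pos _
end
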